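/- The set G̃_big(E) of pairs (g, ω), where g : E → Aˣ is smooth and ω is a smooth 2-form on E, is a group under the operation (g₁,ω₁)·(g₂,ω₂) = (g₁g₂, ω₁ + ω₂ + λ(g₁,g₂)), with identity element (1, 0) (the constant map 1 and the zero 2-form) and with inverse given by (g,ω)⁻¹ = (g⁻¹, −ω). -/

import Mathlib

/-!
STATEMENT 1: The set `G̃_big(E)` of pairs `(g, ω)`, with `g : E → Aˣ` smooth and `ω` a
smooth 2-form on `E`, is a group under
`(g₁,ω₁)·(g₂,ω₂) = (g₁g₂, ω₁ + ω₂ + λ(g₁,g₂))`, with identity `(1, 0)` and inverse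
`(g,ω)⁻¹ = (g⁻¹, −ω)`.

We encode elements of `G̃_big(E)` as pairs `p : (E → A) × (E → E → E → ℝ)` satisfying the
predicate `GBig` (first component a smooth unit-valued map, second a smooth 2-form), and the
theorem asserts: closure of `GBig` under the product and the inverse, membership of the unit,
associativity, the unit laws and the inverse laws.
-/

/-- A smooth map `E → Aˣ`, encoded as a smooth `A`-valued map with invertible values. -/
def SmoothUnitMap {E : Type*} [NormedAddCommGroup E] [NormedSpace ℝ E]
    {A : Type*} [NormedRing A] [NormedAlgebra ℝ A] (g : E → A) : Prop :=
  ContDiff ℝ (⊤ : ℕ∞) g ∧ ∀ x, IsUnit (g x)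

/-- A smooth 2-form on `E`, encoded as a scalar function `ω x v w` which is alternating and
bilinear in `(v,w)` and jointly smooth. -/
def IsSmooth2Form {E : Type*} [NormedAddCommGroup E] [NormedSpace ℝ E]
    (ω : E → E → E → ℝ) : Prop :=
  (∀ x v, ω x v v = 0) ∧
  (∀ x w, IsLinearMap ℝ fun v => ω x v w) ∧
  (∀ x v, IsLinearMap ℝ fun w => ω x v w) ∧
  ContDiff ℝ (⊤ : ℕ∞) fun p : E × E × E => ω p.1 p.2.1 p.2.2

/-- `α_g(x)v = g(x)⁻¹ * (D_v g)(x)`. -/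
noncomputable def alphaD {E : Type*} [NormedAddCommGroup E] [NormedSpace ℝ E]
    {A : Type*} [NormedRing A] [NormedAlgebra ℝ A] (g : E → A) (x v : E) : A :=
  Ring.inverse (g x) * (fderiv ℝ g x v)

/-- `β_g(x)v = (D_v g)(x) * g(x)⁻¹`. -/
noncomputable def betaD {E : Type*} [NormedAddCommGroup E] [NormedSpace ℝ E]
    {A : Type*} [NormedRing A] [NormedAlgebra ℝ A] (g : E → A) (x v : E) : A :=
  (fderiv ℝ g x v) * Ring.inverse (g x)

/-- `λ(g₁,g₂)(x)(v,w) = (1/2)(⟨α_{g₁}(x)v, β_{g₂}(x)w⟩ − ⟨α_{g₁}(x)w, β_{g₂}(x)v⟩)`. -/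
noncomputable def lamForm {E : Type*} [NormedAddCommGroup E] [NormedSpace ℝ E]
    {A : Type*} [NormedRing A] [NormedAlgebra ℝ A]
    (B : A →ₗ[ℝ] A →ₗ[ℝ] ℝ) (g₁ g₂ : E → A) (x v w : E) : ℝ :=
  (1 / 2) * (B (alphaD g₁ x v) (betaD g₂ x w) - B (alphaD g₁ x w) (betaD g₂ x v))

/-- Membership in `G̃_big(E)`. -/
def GBig {E : Type*} [NormedAddCommGroup E] [NormedSpace ℝ E]
    {A : Type*} [NormedRing A] [NormedAlgebra ℝ A]
    (p : (E → A) × (E → E → E → ℝ)) : Prop :=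
  SmoothUnitMap p.1 ∧ IsSmooth2Form p.2

/-- The product `(g₁,ω₁)·(g₂,ω₂) = (g₁g₂, ω₁ + ω₂ + λ(g₁,g₂))` in `G̃_big(E)`. -/
noncomputable def gbigMul {E : Type*} [NormedAddCommGroup E] [NormedSpace ℝ E]
    {A : Type*} [NormedRing A] [NormedAlgebra ℝ A] (B : A →ₗ[ℝ] A →ₗ[ℝ] ℝ)
    (p q : (E → A) × (E → E → E → ℝ)) : (E → A) × (E → E → E → ℝ) :=
  (p.1 * q.1, fun x v w => p.2 x v w + q.2 x v w + lamForm B p.1 q.1 x v w)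

/-- The identity element `(1, 0)` of `G̃_big(E)`. -/
def gbigOne {E : Type*} [NormedAddCommGroup E] [NormedSpace ℝ E]
    {A : Type*} [NormedRing A] [NormedAlgebra ℝ A] : (E → A) × (E → E → E → ℝ) :=
  ((1 : E → A), fun _ _ _ => (0 : ℝ))

/-- The inverse `(g,ω)⁻¹ = (g⁻¹, −ω)` in `G̃_big(E)`. -/
noncomputable def gbigInv {E : Type*} [NormedAddCommGroup E] [NormedSpace ℝ E]
    {A : Type*} [NormedRing A] [NormedAlgebra ℝ A]
    (p : (E → A) × (E → E → E → ℝ)) : (E → A) × (E → E → E → ℝ) :=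
  (fun x => Ring.inverse (p.1 x), fun x v w => -(p.2 x v w))

section GBigAux

variable {E : Type*} [NormedAddCommGroup E] [NormedSpace ℝ E]
variable {A : Type*} [NormedRing A] [NormedAlgebra ℝ A] [CompleteSpace A]

lemma gbig_inv_eq_unit {a : A} (h : IsUnit a) : Ring.inverse a = ((h.unit⁻¹ : Aˣ) : A) := by
  have h2 := Ring.inverse_unit h.unit
  rwa [h.unit_spec] at h2

lemma gbig_ring_inverse_mul {a b : A} (ha : IsUnit a) (hb : IsUnit b) :
    Ring.inverse (a * b) = Ring.inverse b * Ring.inverse a := by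
  have h : a * b = ((ha.unit * hb.unit : Aˣ) : A) := by
    rw [Units.val_mul, ha.unit_spec, hb.unit_spec]
  rw [h, Ring.inverse_unit, mul_inv_rev, Units.val_mul, ← Ring.inverse_unit, ← Ring.inverse_unit,
    ha.unit_spec, hb.unit_spec]

lemma gbig_inv_mul_cancel_left {a : A} (h : IsUnit a) (z : A) :
    Ring.inverse a * (a * z) = z := by
  rw [← mul_assoc, Ring.inverse_mul_cancel a h, one_mul]

lemma gbig_mul_inv_cancel_left {a : A} (h : IsUnit a) (z : A) :
    a * (Ring.inverse a * z) = z := by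
  rw [← mul_assoc, Ring.mul_inverse_cancel a h, one_mul]

lemma smoothUnitMap_inv {g : E → A} (hg : SmoothUnitMap g) :
    ContDiff ℝ (⊤ : ℕ∞) fun x => Ring.inverse (g x) := by
  rw [contDiff_iff_contDiffAt]
  intro x
  have h := contDiffAt_ringInverse ℝ (n := (⊤ : ℕ∞)) (hg.2 x).unit
  rw [(hg.2 x).unit_spec] at h
  exact h.comp x hg.1.contDiffAt

lemma gbig_fderiv_mul {g₁ g₂ : E → A} (h₁ : ContDiff ℝ (⊤ : ℕ∞) g₁) (h₂ : ContDiff ℝ (⊤ : ℕ∞) g₂) (x v : E) :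
    fderiv ℝ (g₁ * g₂) x v = fderiv ℝ g₁ x v * g₂ x + g₁ x * fderiv ℝ g₂ x v := by
  have h := ((h₁.differentiable (by simp) x).hasFDerivAt.mul'
    (h₂.differentiable (by simp) x).hasFDerivAt).fderiv
  have heq : (g₁ * g₂ : E → A) = fun y => g₁ y * g₂ y := rfl
  rw [h]
  simp only [ContinuousLinearMap.add_apply, ContinuousLinearMap.coe_smul', Pi.smul_apply,
    ContinuousLinearMap.smulRight_apply, smul_eq_mul, MulOpposite.smul_eq_mul_unop,
    MulOpposite.unop_op]
  rw [add_comm]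

lemma gbig_fderiv_inv {g : E → A} (hg : SmoothUnitMap g) (x v : E) :
    fderiv ℝ (fun y => Ring.inverse (g y)) x v
      = -(Ring.inverse (g x) * fderiv ℝ g x v * Ring.inverse (g x)) := by
  have hu := hg.2 x
  have h1 : HasFDerivAt Ring.inverse
      (-(ContinuousLinearMap.mulLeftRight ℝ A ↑hu.unit⁻¹ ↑hu.unit⁻¹)) (g x) := by
    have h := hasFDerivAt_ringInverse (𝕜 := ℝ) hu.unit
    rwa [hu.unit_spec] at h
  have h2 := (h1.comp x (hg.1.differentiable (by simp) x).hasFDerivAt).fderiv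
  have h3 : (fun y => Ring.inverse (g y)) = Ring.inverse ∘ g := rfl
  rw [h3, h2]
  simp only [ContinuousLinearMap.coe_comp', Function.comp_apply, ContinuousLinearMap.neg_apply,
    ContinuousLinearMap.mulLeftRight_apply, ← gbig_inv_eq_unit hu]

lemma alphaD_mul {g₁ g₂ : E → A} (h₁ : SmoothUnitMap g₁) (h₂ : SmoothUnitMap g₂) (x v : E) :
    alphaD (g₁ * g₂) x v
      = Ring.inverse (g₂ x) * alphaD g₁ x v * g₂ x + alphaD g₂ x v := by
  have hmc : ∀ z : A, Ring.inverse (g₁ x) * (g₁ x * z) = z := gbig_inv_mul_cancel_left (h₁.2 x)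
  simp only [alphaD, Pi.mul_apply, gbig_fderiv_mul h₁.1 h₂.1,
    gbig_ring_inverse_mul (h₁.2 x) (h₂.2 x), mul_add, mul_assoc, hmc]

lemma betaD_mul {g₂ g₃ : E → A} (h₂ : SmoothUnitMap g₂) (h₃ : SmoothUnitMap g₃) (x v : E) :
    betaD (g₂ * g₃) x v
      = betaD g₂ x v + g₂ x * betaD g₃ x v * Ring.inverse (g₂ x) := by
  have hmc : ∀ z : A, g₃ x * (Ring.inverse (g₃ x) * z) = z := gbig_mul_inv_cancel_left (h₃.2 x)
  simp only [betaD, Pi.mul_apply, gbig_fderiv_mul h₂.1 h₃.1,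
    gbig_ring_inverse_mul (h₂.2 x) (h₃.2 x), add_mul, mul_assoc, hmc]

lemma gbig_inv_inv {a : A} (h : IsUnit a) : Ring.inverse (Ring.inverse a) = a := by
  rw [gbig_inv_eq_unit h, Ring.inverse_unit, inv_inv, h.unit_spec]

lemma betaD_inv {g : E → A} (hg : SmoothUnitMap g) (x v : E) :
    betaD (fun y => Ring.inverse (g y)) x v = -(alphaD g x v) := by
  simp only [betaD, alphaD, gbig_fderiv_inv hg, gbig_inv_inv (hg.2 x), neg_mul, mul_assoc,
    Ring.inverse_mul_cancel _ (hg.2 x), mul_one]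

lemma alphaD_inv {g : E → A} (hg : SmoothUnitMap g) (x v : E) :
    alphaD (fun y => Ring.inverse (g y)) x v = -(betaD g x v) := by
  simp only [alphaD, betaD, gbig_fderiv_inv hg, gbig_inv_inv (hg.2 x), mul_neg]
  rw [← mul_assoc, ← mul_assoc, Ring.mul_inverse_cancel _ (hg.2 x), one_mul]

lemma alphaD_one (x v : E) : alphaD (1 : E → A) x v = 0 := by
  have h : (1 : E → A) = fun _ => (1 : A) := rfl
  simp [alphaD, h, fderiv_const]

lemma betaD_one (x v : E) : betaD (1 : E → A) x v = 0 := by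
  have h : (1 : E → A) = fun _ => (1 : A) := rfl
  simp [betaD, h, fderiv_const]

lemma gbig_bilin_bound (B : A →ₗ[ℝ] A →ₗ[ℝ] ℝ)
    (Bcont : Continuous fun p : A × A => B p.1 p.2) :
    ∃ C : ℝ, ∀ x y : A, ‖B x y‖ ≤ C * ‖x‖ * ‖y‖ := by
  have hc : ContinuousAt (fun p : A × A => B p.1 p.2) (0, 0) := Bcont.continuousAt
  rw [Metric.continuousAt_iff] at hc
  obtain ⟨δ, hδ, h⟩ := hc 1 one_pos
  set ε := δ / 2 with hε
  have hεpos : 0 < ε := by positivity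
  refine ⟨ε⁻¹ * ε⁻¹, fun x y => ?_⟩
  rcases eq_or_ne x 0 with rfl | hx
  · simp
  rcases eq_or_ne y 0 with rfl | hy
  · simp
  have hxn : 0 < ‖x‖ := norm_pos_iff.mpr hx
  have hyn : 0 < ‖y‖ := norm_pos_iff.mpr hy
  have hdist : dist (((ε / ‖x‖) • x, (ε / ‖y‖) • y) : A × A) (0, 0) < δ := by
    rw [Prod.dist_eq]
    have e1 : dist ((ε / ‖x‖) • x) (0 : A) = ε := by
      rw [dist_zero_right, norm_smul, Real.norm_eq_abs, abs_of_pos (by positivity)]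
      field_simp
    have e2 : dist ((ε / ‖y‖) • y) (0 : A) = ε := by
      rw [dist_zero_right, norm_smul, Real.norm_eq_abs, abs_of_pos (by positivity)]
      field_simp
    rw [e1, e2, max_self]
    rw [hε]; linarith
  have key := h hdist
  simp only [map_smul, LinearMap.smul_apply, smul_eq_mul, map_zero, LinearMap.zero_apply,
    Real.dist_eq, sub_zero] at key
  have key2 : ε / ‖x‖ * (ε / ‖y‖) * |B x y| < 1 := by
    have e : |ε / ‖y‖ * (ε / ‖x‖ * (B x y))| = ε / ‖x‖ * (ε / ‖y‖) * |B x y| := by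
      rw [abs_mul, abs_mul, abs_of_pos (by positivity : (0:ℝ) < ε / ‖y‖),
        abs_of_pos (by positivity : (0:ℝ) < ε / ‖x‖)]
      ring
    rw [← e]
    exact key
  have hcd : 0 < ε / ‖x‖ * (ε / ‖y‖) := by positivity
  have hfin : |B x y| < 1 / (ε / ‖x‖ * (ε / ‖y‖)) := by
    rw [lt_div_iff₀ hcd, mul_comm]
    exact key2
  calc ‖B x y‖ = |B x y| := rfl
    _ ≤ 1 / (ε / ‖x‖ * (ε / ‖y‖)) := le_of_lt hfin
    _ = ε⁻¹ * ε⁻¹ * ‖x‖ * ‖y‖ := by field_simp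

lemma gbig_contDiff_B_comp {F : Type*} [NormedAddCommGroup F] [NormedSpace ℝ F]
    (Bc : A →L[ℝ] A →L[ℝ] ℝ) {f h : F → A} (hf : ContDiff ℝ (⊤ : ℕ∞) f) (hh : ContDiff ℝ (⊤ : ℕ∞) h) :
    ContDiff ℝ (⊤ : ℕ∞) fun x => Bc (f x) (h x) :=
  (Bc.isBoundedBilinearMap.contDiff).comp (hf.prodMk hh)

lemma gbig_contDiff_alphaD {g : E → A} (hg : SmoothUnitMap g) :
    ContDiff ℝ (⊤ : ℕ∞) fun p : E × E => alphaD g p.1 p.2 := by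
  have h1 : ContDiff ℝ (⊤ : ℕ∞) fun p : E × E => Ring.inverse (g p.1) :=
    (smoothUnitMap_inv hg).comp contDiff_fst
  have hd : ContDiff ℝ (⊤ : ℕ∞) (fderiv ℝ g) := hg.1.fderiv_right (by simp)
  have h2 : ContDiff ℝ (⊤ : ℕ∞) fun p : E × E => fderiv ℝ g p.1 p.2 :=
    (hd.comp contDiff_fst).clm_apply contDiff_snd
  exact h1.mul h2

lemma gbig_contDiff_betaD {g : E → A} (hg : SmoothUnitMap g) :
    ContDiff ℝ (⊤ : ℕ∞) fun p : E × E => betaD g p.1 p.2 := by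
  have h1 : ContDiff ℝ (⊤ : ℕ∞) fun p : E × E => Ring.inverse (g p.1) :=
    (smoothUnitMap_inv hg).comp contDiff_fst
  have hd : ContDiff ℝ (⊤ : ℕ∞) (fderiv ℝ g) := hg.1.fderiv_right (by simp)
  have h2 : ContDiff ℝ (⊤ : ℕ∞) fun p : E × E => fderiv ℝ g p.1 p.2 :=
    (hd.comp contDiff_fst).clm_apply contDiff_snd
  exact h2.mul h1

end GBigAux

section GBigAux2

variable {E : Type*} [NormedAddCommGroup E] [NormedSpace ℝ E]
variable {A : Type*} [NormedRing A] [NormedAlgebra ℝ A] [CompleteSpace A]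

lemma gbig_Bconj (B : A →ₗ[ℝ] A →ₗ[ℝ] ℝ)
    (Bsymm : ∀ x y : A, B x y = B y x)
    (Binv : ∀ x y z : A, B (x * y) z = B x (y * z))
    (a b c c' : A) : B (c' * a * c) b = B a (c * b * c') := by
  rw [mul_assoc c' a c, Binv, Bsymm, mul_assoc a c b, Binv]

lemma lamForm_self (B : A →ₗ[ℝ] A →ₗ[ℝ] ℝ) (g₁ g₂ : E → A) (x v : E) :
    lamForm B g₁ g₂ x v v = 0 := by
  simp [lamForm]

lemma lamForm_isLinear_left (B : A →ₗ[ℝ] A →ₗ[ℝ] ℝ) (g₁ g₂ : E → A) (x w : E) :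
    IsLinearMap ℝ fun v => lamForm B g₁ g₂ x v w := by
  constructor
  · intro a b
    simp only [lamForm, alphaD, betaD, map_add, mul_add, add_mul, LinearMap.add_apply]
    ring
  · intro c a
    simp only [lamForm, alphaD, betaD, map_smul, LinearMap.smul_apply, smul_eq_mul,
      mul_smul_comm, smul_mul_assoc]
    ring

lemma lamForm_isLinear_right (B : A →ₗ[ℝ] A →ₗ[ℝ] ℝ) (g₁ g₂ : E → A) (x v : E) :
    IsLinearMap ℝ fun w => lamForm B g₁ g₂ x v w := by
  constructor
  · intro a b
    simp only [lamForm, alphaD, betaD, map_add, mul_add, add_mul, LinearMap.add_apply]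
    ring
  · intro c a
    simp only [lamForm, alphaD, betaD, map_smul, LinearMap.smul_apply, smul_eq_mul,
      mul_smul_comm, smul_mul_assoc]
    ring

lemma lamForm_contDiff (B : A →ₗ[ℝ] A →ₗ[ℝ] ℝ) (Bc : A →L[ℝ] A →L[ℝ] ℝ)
    (hBc : ∀ a b : A, Bc a b = B a b)
    {g₁ g₂ : E → A} (h₁ : SmoothUnitMap g₁) (h₂ : SmoothUnitMap g₂) :
    ContDiff ℝ (⊤ : ℕ∞) fun p : E × E × E => lamForm B g₁ g₂ p.1 p.2.1 p.2.2 := by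
  have m1 : ContDiff ℝ (⊤ : ℕ∞) fun p : E × E × E => (p.1, p.2.1) :=
    contDiff_fst.prodMk (contDiff_fst.comp contDiff_snd)
  have m2 : ContDiff ℝ (⊤ : ℕ∞) fun p : E × E × E => (p.1, p.2.2) :=
    contDiff_fst.prodMk (contDiff_snd.comp contDiff_snd)
  have a1 : ContDiff ℝ (⊤ : ℕ∞) fun p : E × E × E => alphaD g₁ p.1 p.2.1 :=
    (gbig_contDiff_alphaD h₁).comp m1
  have a2 : ContDiff ℝ (⊤ : ℕ∞) fun p : E × E × E => alphaD g₁ p.1 p.2.2 :=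
    (gbig_contDiff_alphaD h₁).comp m2
  have b1 : ContDiff ℝ (⊤ : ℕ∞) fun p : E × E × E => betaD g₂ p.1 p.2.2 :=
    (gbig_contDiff_betaD h₂).comp m2
  have b2 : ContDiff ℝ (⊤ : ℕ∞) fun p : E × E × E => betaD g₂ p.1 p.2.1 :=
    (gbig_contDiff_betaD h₂).comp m1
  have t1 := gbig_contDiff_B_comp Bc a1 b1
  have t2 := gbig_contDiff_B_comp Bc a2 b2
  have he : (fun p : E × E × E => lamForm B g₁ g₂ p.1 p.2.1 p.2.2)
      = fun p : E × E × E => (1 / 2 : ℝ) *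
        (Bc (alphaD g₁ p.1 p.2.1) (betaD g₂ p.1 p.2.2)
          - Bc (alphaD g₁ p.1 p.2.2) (betaD g₂ p.1 p.2.1)) := by
    funext p
    simp [lamForm, hBc]
  rw [he]
  exact contDiff_const.mul (t1.sub t2)

lemma lamForm_assoc (B : A →ₗ[ℝ] A →ₗ[ℝ] ℝ)
    (Bsymm : ∀ x y : A, B x y = B y x)
    (Binv : ∀ x y z : A, B (x * y) z = B x (y * z))
    {g₁ g₂ g₃ : E → A} (h₁ : SmoothUnitMap g₁) (h₂ : SmoothUnitMap g₂)
    (h₃ : SmoothUnitMap g₃) (x v w : E) :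
    lamForm B g₁ g₂ x v w + lamForm B (g₁ * g₂) g₃ x v w
      = lamForm B g₂ g₃ x v w + lamForm B g₁ (g₂ * g₃) x v w := by
  simp only [lamForm, alphaD_mul h₁ h₂, betaD_mul h₂ h₃, map_add, LinearMap.add_apply,
    gbig_Bconj B Bsymm Binv]
  ring

lemma lamForm_one_left (B : A →ₗ[ℝ] A →ₗ[ℝ] ℝ) (g : E → A) (x v w : E) :
    lamForm B (1 : E → A) g x v w = 0 := by
  simp [lamForm, alphaD_one]

lemma lamForm_one_right (B : A →ₗ[ℝ] A →ₗ[ℝ] ℝ) (g : E → A) (x v w : E) :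
    lamForm B g (1 : E → A) x v w = 0 := by
  simp [lamForm, betaD_one]

lemma lamForm_inv_right (B : A →ₗ[ℝ] A →ₗ[ℝ] ℝ)
    (Bsymm : ∀ x y : A, B x y = B y x)
    {g : E → A} (hg : SmoothUnitMap g) (x v w : E) :
    lamForm B g (fun y => Ring.inverse (g y)) x v w = 0 := by
  simp only [lamForm, betaD_inv hg, map_neg]
  rw [Bsymm (alphaD g x w) (alphaD g x v)]
  ring

lemma lamForm_inv_left (B : A →ₗ[ℝ] A →ₗ[ℝ] ℝ)
    (Bsymm : ∀ x y : A, B x y = B y x)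
    {g : E → A} (hg : SmoothUnitMap g) (x v w : E) :
    lamForm B (fun y => Ring.inverse (g y)) g x v w = 0 := by
  simp only [lamForm, alphaD_inv hg, map_neg, LinearMap.neg_apply]
  rw [Bsymm (betaD g x w) (betaD g x v)]
  ring

end GBigAux2

theorem gbig_group
    {E : Type*} [NormedAddCommGroup E] [NormedSpace ℝ E]
    {A : Type*} [NormedRing A] [NormedAlgebra ℝ A] [CompleteSpace A]
    (B : A →ₗ[ℝ] A →ₗ[ℝ] ℝ)
    (Bcont : Continuous fun p : A × A => B p.1 p.2)
    (Bsymm : ∀ x y : A, B x y = B y x)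
    (Binv : ∀ x y z : A, B (x * y) z = B x (y * z)) :
    -- closure under the product
    (∀ p q : (E → A) × (E → E → E → ℝ), GBig p → GBig q → GBig (gbigMul B p q)) ∧
    -- the identity element belongs to `G̃_big(E)`
    GBig (gbigOne (E := E) (A := A)) ∧
    -- closure under the inverse
    (∀ p : (E → A) × (E → E → E → ℝ), GBig p → GBig (gbigInv p)) ∧
    -- associativity
    (∀ p q r : (E → A) × (E → E → E → ℝ), GBig p → GBig q → GBig r →
      gbigMul B (gbigMul B p q) r = gbigMul B p (gbigMul B q r)) ∧
    -- unit laws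
    (∀ p : (E → A) × (E → E → E → ℝ), GBig p → gbigMul B (gbigOne (E := E) (A := A)) p = p ∧ gbigMul B p (gbigOne (E := E) (A := A)) = p) ∧
    -- inverse laws
    (∀ p : (E → A) × (E → E → E → ℝ), GBig p → gbigMul B p (gbigInv p) = gbigOne (E := E) (A := A) ∧ gbigMul B (gbigInv p) p = gbigOne (E := E) (A := A)) := by
  obtain ⟨C, hC⟩ := gbig_bilin_bound B Bcont
  set Bc : A →L[ℝ] A →L[ℝ] ℝ := LinearMap.mkContinuous₂ B C hC with hBcdef
  have hBc : ∀ a b : A, Bc a b = B a b := fun a b => rfl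
  refine ⟨?_, ?_, ?_, ?_, ?_, ?_⟩
  · -- closure under the product
    rintro ⟨g₁, ω₁⟩ ⟨g₂, ω₂⟩ ⟨hg₁, hω₁⟩ ⟨hg₂, hω₂⟩
    dsimp only at hg₁ hω₁ hg₂ hω₂
    refine ⟨⟨hg₁.1.mul hg₂.1, fun x => (hg₁.2 x).mul (hg₂.2 x)⟩, ?_, ?_, ?_, ?_⟩
    · intro x v
      simp [gbigMul, hω₁.1 x v, hω₂.1 x v, lamForm_self]
    · intro x w
      have l1 := hω₁.2.1 x w
      have l2 := hω₂.2.1 x w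
      have l3 := lamForm_isLinear_left B g₁ g₂ x w
      refine ⟨fun a b => ?_, fun c a => ?_⟩
      · show ω₁ x (a + b) w + ω₂ x (a + b) w + lamForm B g₁ g₂ x (a + b) w = _
        rw [l1.map_add, l2.map_add, l3.map_add]
        show _ = ω₁ x a w + ω₂ x a w + lamForm B g₁ g₂ x a w
          + (ω₁ x b w + ω₂ x b w + lamForm B g₁ g₂ x b w)
        ring
      · show ω₁ x (c • a) w + ω₂ x (c • a) w + lamForm B g₁ g₂ x (c • a) w = _
        rw [l1.map_smul, l2.map_smul, l3.map_smul]
        show _ = c • (ω₁ x a w + ω₂ x a w + lamForm B g₁ g₂ x a w)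
        simp only [smul_eq_mul]
        ring
    · intro x v
      have l1 := hω₁.2.2.1 x v
      have l2 := hω₂.2.2.1 x v
      have l3 := lamForm_isLinear_right B g₁ g₂ x v
      refine ⟨fun a b => ?_, fun c a => ?_⟩
      · show ω₁ x v (a + b) + ω₂ x v (a + b) + lamForm B g₁ g₂ x v (a + b) = _
        rw [l1.map_add, l2.map_add, l3.map_add]
        show _ = ω₁ x v a + ω₂ x v a + lamForm B g₁ g₂ x v a
          + (ω₁ x v b + ω₂ x v b + lamForm B g₁ g₂ x v b)
        ring
      · show ω₁ x v (c • a) + ω₂ x v (c • a) + lamForm B g₁ g₂ x v (c • a) = _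
        rw [l1.map_smul, l2.map_smul, l3.map_smul]
        show _ = c • (ω₁ x v a + ω₂ x v a + lamForm B g₁ g₂ x v a)
        simp only [smul_eq_mul]
        ring
    · exact (hω₁.2.2.2.add hω₂.2.2.2).add (lamForm_contDiff B Bc hBc hg₁ hg₂)
  · -- identity element
    refine ⟨⟨contDiff_const, fun x => isUnit_one⟩, fun x v => rfl,
      fun x w => ⟨fun a b => by simp [gbigOne], fun c a => by simp [gbigOne]⟩,
      fun x v => ⟨fun a b => by simp [gbigOne], fun c a => by simp [gbigOne]⟩, contDiff_const⟩
  · -- closure under the inverse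
    rintro ⟨g, ω⟩ ⟨hg, hω⟩
    dsimp only at hg hω
    refine ⟨⟨smoothUnitMap_inv hg, fun x => ?_⟩, fun x v => by simp [gbigInv, hω.1 x v],
      ?_, ?_, hω.2.2.2.neg⟩
    · show IsUnit (Ring.inverse (g x))
      rw [gbig_inv_eq_unit (hg.2 x)]
      exact Units.isUnit _
    · intro x w
      refine ⟨fun a b => ?_, fun c a => ?_⟩
      · show -(ω x (a + b) w) = -(ω x a w) + -(ω x b w)
        rw [(hω.2.1 x w).map_add]; ring
      · show -(ω x (c • a) w) = c • -(ω x a w)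
        rw [(hω.2.1 x w).map_smul]
        simp only [smul_eq_mul, mul_neg]
    · intro x v
      refine ⟨fun a b => ?_, fun c a => ?_⟩
      · show -(ω x v (a + b)) = -(ω x v a) + -(ω x v b)
        rw [(hω.2.2.1 x v).map_add]; ring
      · show -(ω x v (c • a)) = c • -(ω x v a)
        rw [(hω.2.2.1 x v).map_smul]
        simp only [smul_eq_mul, mul_neg]
  · -- associativity
    rintro ⟨g₁, ω₁⟩ ⟨g₂, ω₂⟩ ⟨g₃, ω₃⟩ ⟨hg₁, _⟩ ⟨hg₂, _⟩ ⟨hg₃, _⟩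
    dsimp only at hg₁ hg₂ hg₃
    simp only [gbigMul, Prod.mk.injEq]
    constructor
    · exact mul_assoc g₁ g₂ g₃
    · funext x v w
      have h := lamForm_assoc B Bsymm Binv hg₁ hg₂ hg₃ x v w
      linarith
  · -- unit laws
    rintro ⟨g, ω⟩ ⟨hg, hω⟩
    dsimp only at hg hω
    constructor
    · simp only [gbigMul, gbigOne, Prod.mk.injEq]
      constructor
      · exact one_mul g
      · funext x v w
        simp [lamForm_one_left]
    · simp only [gbigMul, gbigOne, Prod.mk.injEq]
      constructor
      · exact mul_one g
      · funext x v w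
        simp [lamForm_one_right]
  · -- inverse laws
    rintro ⟨g, ω⟩ ⟨hg, hω⟩
    dsimp only at hg hω
    constructor
    · simp only [gbigMul, gbigInv, gbigOne, Prod.mk.injEq]
      constructor
      · funext x
        exact Ring.mul_inverse_cancel _ (hg.2 x)
      · funext x v w
        simp [lamForm_inv_right B Bsymm hg x v w]
    · simp only [gbigMul, gbigInv, gbigOne, Prod.mk.injEq]
      constructor
      · funext x
        exact Ring.inverse_mul_cancel _ (hg.2 x)
      · funext x v w
        simp [lamForm_inv_left B Bsymm hg x v w]
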